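/- There do not exist a positive-edge-weighted tree T with four distinguished leaves a, b, c, d and reals 0 ≤ d_min ≤ d_max such that: d_min ≤ d_T(a,b) ≤ d_max, d_min ≤ d_T(b,c) ≤ d_max, d_min ≤ d_T(c,d) ≤ d_max, d_T(a,d) < d_min, d_T(a,c) > d_max, and d_T(b,d) > d_max. (Forbidden coloring f-c(P_4): the path a-b-c-d with non-edge (a,d) red and non-edges (a,c), (b,d) blue is not realizable.) -/

import Mathlib

open SimpleGraph

/-- A tree with positive real edge weights. -/
structure WTree (α : Type) where
  g : SimpleGraph α
  isTree : g.IsTree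
  w : α → α → ℝ
  w_symm : ∀ a b, w a b = w b a
  w_pos : ∀ a b, g.Adj a b → 0 < w a b

/-- The weighted distance between two vertices of a weighted tree: the sum of
the weights of the edges on the unique path between them. -/
noncomputable def WTree.dist {α : Type} (T : WTree α) (u v : α) : ℝ :=
  (((T.isTree.existsUnique_path u v).exists.choose).darts.map
    (fun d => T.w d.toProd.1 d.toProd.2)).sum

/-- A vertex of a weighted tree is a leaf if it has exactly one neighbor. -/
def WTree.IsLeaf {α : Type} (T : WTree α) (v : α) : Prop :=
  ∃! u, T.g.Adj v u

/-- `G = PCG(T, dmin, dmax)` via the leaf-assignment `f`. -/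
def IsPCGWith {V β : Type} (G : SimpleGraph V) (T : WTree β) (f : V → β)
    (dmin dmax : ℝ) : Prop :=
  Function.Injective f ∧ (∀ v, T.IsLeaf (f v)) ∧ (∀ b, T.IsLeaf b → ∃ v, f v = b) ∧
    ∀ u v : V, u ≠ v →
      (G.Adj u v ↔ dmin ≤ T.dist (f u) (f v) ∧ T.dist (f u) (f v) ≤ dmax)

/-- A graph is a pairwise compatibility graph. -/
def IsPCG {V : Type} (G : SimpleGraph V) : Prop :=
  ∃ (β : Type) (T : WTree β) (f : V → β) (dmin dmax : ℝ),
    0 ≤ dmin ∧ dmin ≤ dmax ∧ IsPCGWith G T f dmin dmax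

/-!
Tree metrics satisfy the four-point condition: for any four vertices `a, b, c, d` the largest of
`d(a,b) + d(c,d)`, `d(a,d) + d(b,c)` and `d(a,c) + d(b,d)` is attained twice. If the paths
`x — y` and `z — w` share a vertex `v`, splitting both at `v` and using the triangle inequality
gives `d(x,z) + d(y,w) ≤ d(x,y) + d(z,w)`. If they are disjoint, let `m` be the first vertex
of the path `y — x` on the path `x — w`, and `n` the first vertex of `z — w` on its part
`m — w`; then `y — m — n — z` is a path, which gives `d(x,z) + d(y,w) ≤ d(x,w) + d(y,z)`.
For the coloring in question `d(a,c) + d(b,d) > 2 dmax` exceeds both other sums, so it is the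
unique maximum.
-/

namespace SimpleGraph.Walk

variable {V : Type} {G : SimpleGraph V}

lemma IsPath.append {u v w : V} {p : G.Walk u v} {q : G.Walk v w} (hp : p.IsPath)
    (hq : q.IsPath) (h : ∀ x ∈ p.support, x ∈ q.support → x = v) : (p.append q).IsPath := by
  rw [isPath_def, support_append, List.nodup_append]
  refine ⟨hp.support_nodup, hq.support_nodup.tail, fun x hx y hy hxy => ?_⟩
  subst hxy
  obtain rfl := h x hx (List.mem_of_mem_tail hy)
  have hnodup := hq.support_nodup
  rw [← q.cons_tail_support] at hnodup
  exact (List.nodup_cons.1 hnodup).1 hy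

lemma exists_append_eq_of_end_mem {u v : V} (p : G.Walk u v) {S : Set V} (hv : v ∈ S) :
    ∃ m ∈ S, ∃ (r : G.Walk u m) (s : G.Walk m v),
      r.append s = p ∧ ∀ x ∈ r.support, x ∈ S → x = m := by
  induction p with
  | nil => exact ⟨_, hv, nil, nil, rfl, by simp⟩
  | @cons u w v h p ih =>
    by_cases hu : u ∈ S
    · exact ⟨u, hu, nil, cons h p, rfl, by simp⟩
    obtain ⟨m, hm, r, s, rfl, hr⟩ := ih hv
    refine ⟨m, hm, cons h r, s, rfl, fun x hx hxS => ?_⟩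
    rcases List.mem_cons.1 (support_cons h r ▸ hx) with rfl | hx
    · exact absurd hxS hu
    · exact hr x hx hxS

end SimpleGraph.Walk

namespace WTree

open SimpleGraph.Walk

variable {α : Type} (T : WTree α)

noncomputable def weight {u v : α} (p : T.g.Walk u v) : ℝ :=
  (p.darts.map fun d => T.w d.toProd.1 d.toProd.2).sum

lemma weight_append {u v x : α} (p : T.g.Walk u v) (q : T.g.Walk v x) :
    T.weight (p.append q) = T.weight p + T.weight q := by
  simp [weight, darts_append]

lemma weight_reverse {u v : α} (p : T.g.Walk u v) : T.weight p.reverse = T.weight p := by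
  simp only [weight, darts_reverse, List.map_reverse, List.sum_reverse, List.map_map]
  congr 1
  exact List.map_congr_left fun d _ => T.w_symm _ _

lemma weight_bypass_le [DecidableEq α] {u v : α} (p : T.g.Walk u v) :
    T.weight p.bypass ≤ T.weight p :=
  ((darts_bypass_sublist_darts p).map _).sum_le_sum fun _ hx => by
    obtain ⟨d, _, rfl⟩ := List.mem_map.1 hx
    exact (T.w_pos _ _ d.adj).le

lemma exists_isPath (u v : α) : ∃ p : T.g.Walk u v, p.IsPath :=
  (T.isTree.existsUnique_path u v).exists

lemma dist_eq_weight {u v : α} {p : T.g.Walk u v} (hp : p.IsPath) : T.dist u v = T.weight p := by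
  have huniq := T.isTree.existsUnique_path u v
  change T.weight huniq.exists.choose = _
  rw [huniq.unique huniq.exists.choose_spec hp]

lemma dist_le_weight {u v : α} (p : T.g.Walk u v) : T.dist u v ≤ T.weight p := by
  classical
  exact (T.dist_eq_weight p.bypass_isPath).trans_le (T.weight_bypass_le p)

lemma dist_comm (u v : α) : T.dist u v = T.dist v u := by
  obtain ⟨p, hp⟩ := T.exists_isPath u v
  rw [T.dist_eq_weight hp, T.dist_eq_weight hp.reverse, weight_reverse]

lemma dist_triangle (x y z : α) : T.dist x z ≤ T.dist x y + T.dist y z := by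
  obtain ⟨p, hp⟩ := T.exists_isPath x y
  obtain ⟨q, hq⟩ := T.exists_isPath y z
  rw [T.dist_eq_weight hp, T.dist_eq_weight hq, ← weight_append]
  exact T.dist_le_weight _

lemma dist_eq_add_of_isPath_append {u v x : α} {p : T.g.Walk u v} {q : T.g.Walk v x}
    (h : (p.append q).IsPath) : T.dist u x = T.dist u v + T.dist v x := by
  rw [T.dist_eq_weight h, weight_append, T.dist_eq_weight h.of_append_left,
    T.dist_eq_weight h.of_append_right]

lemma dist_eq_add_of_mem_support {u v m : α} {p : T.g.Walk u v} (hp : p.IsPath)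
    (hm : m ∈ p.support) : T.dist u v = T.dist u m + T.dist m v := by
  classical
  exact T.dist_eq_add_of_isPath_append ((p.take_spec hm).symm ▸ hp)

lemma dist_add_dist_le_of_mem_support {x y z w v : α} {p : T.g.Walk x y} {q : T.g.Walk z w}
    (hp : p.IsPath) (hq : q.IsPath) (hvp : v ∈ p.support) (hvq : v ∈ q.support) :
    T.dist x z + T.dist y w ≤ T.dist x y + T.dist z w := by
  rw [T.dist_eq_add_of_mem_support hp hvp, T.dist_eq_add_of_mem_support hq hvq]
  linarith [T.dist_triangle x v z, T.dist_triangle y v w, T.dist_comm y v, T.dist_comm z v]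

lemma dist_add_dist_le_of_disjoint {x y z w : α} {p : T.g.Walk x y} {q : T.g.Walk z w}
    (hp : p.IsPath) (hq : q.IsPath) (hpq : ∀ v ∈ p.support, v ∉ q.support) :
    T.dist x z + T.dist y w ≤ T.dist x w + T.dist y z := by
  classical
  obtain ⟨p₀, hp₀⟩ := T.exists_isPath x w
  obtain ⟨m, hm, r, s, hrs, hr⟩ :=
    p.reverse.exists_append_eq_of_end_mem (S := {v | v ∈ p₀.support}) p₀.start_mem_support
  have hrp : r.IsPath := (hrs ▸ hp.reverse).of_append_left
  have hr_sub : ∀ v ∈ r.support, v ∈ p.support := fun v hv => by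
    have hv' := (mem_support_append_iff r s).2 (Or.inl hv)
    rwa [hrs, support_reverse, List.mem_reverse] at hv'
  set Q := p₀.dropUntil m hm
  obtain ⟨n, hn, r', s', hrs', hr'⟩ :=
    q.exists_append_eq_of_end_mem (S := {v | v ∈ Q.support}) Q.end_mem_support
  have hr'p : r'.IsPath := (hrs' ▸ hq).of_append_left
  have hr'_sub : ∀ v ∈ r'.support, v ∈ q.support := fun v hv => by
    rw [← hrs', mem_support_append_iff]; exact Or.inl hv
  have hQ_sub : ∀ v ∈ Q.support, v ∈ p₀.support := fun v hv =>
    p₀.support_dropUntil_subset_support hm hv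
  set seg := Q.takeUntil n hn
  have hseg_sub : ∀ v ∈ seg.support, v ∈ Q.support := fun v hv =>
    Q.support_takeUntil_subset_support hn hv
  have hyz : (r.append (seg.append r'.reverse)).IsPath := by
    refine hrp.append (((hp₀.dropUntil hm).takeUntil hn).append hr'p.reverse ?_) ?_
    · intro v hv hv'
      exact hr' v (by simpa using hv') (hseg_sub v hv)
    · intro v hv hv'
      rcases (mem_support_append_iff _ _).1 hv' with hv' | hv'
      · exact hr v hv (hQ_sub v (hseg_sub v hv'))
      · exact absurd (hr'_sub v (by simpa using hv')) (hpq v (hr_sub v hv))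
  have e_yz := T.dist_eq_add_of_isPath_append hyz
  have e_mz := T.dist_eq_add_of_isPath_append hyz.of_append_right
  have e_xw := T.dist_eq_add_of_mem_support hp₀ hm
  have e_mw := T.dist_eq_add_of_mem_support (hp₀.dropUntil hm) hn
  linarith [T.dist_triangle x n z, T.dist_triangle y m w, T.dist_triangle x m n]

theorem four_point (x y z w : α) :
    T.dist x z + T.dist y w ≤ max (T.dist x y + T.dist z w) (T.dist x w + T.dist y z) := by
  obtain ⟨p, hp⟩ := T.exists_isPath x y
  obtain ⟨q, hq⟩ := T.exists_isPath z w
  by_cases h : ∃ v ∈ p.support, v ∈ q.support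
  · obtain ⟨v, hvp, hvq⟩ := h
    exact le_max_of_le_left (T.dist_add_dist_le_of_mem_support hp hq hvp hvq)
  · exact le_max_of_le_right
      (T.dist_add_dist_le_of_disjoint hp hq fun v hvp hvq => h ⟨v, hvp, hvq⟩)

end WTree

theorem forbidden_P4 : ¬ ∃ (β : Type) (T : WTree β) (a b c d : β) (dmin dmax : ℝ),
    T.IsLeaf a ∧ T.IsLeaf b ∧ T.IsLeaf c ∧ T.IsLeaf d ∧
    a ≠ b ∧ a ≠ c ∧ a ≠ d ∧ b ≠ c ∧ b ≠ d ∧ c ≠ d ∧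
    0 ≤ dmin ∧ dmin ≤ dmax ∧
    dmin ≤ T.dist a b ∧ T.dist a b ≤ dmax ∧
    dmin ≤ T.dist b c ∧ T.dist b c ≤ dmax ∧
    dmin ≤ T.dist c d ∧ T.dist c d ≤ dmax ∧
    T.dist a d < dmin ∧
    dmax < T.dist a c ∧ dmax < T.dist b d := by
  rintro ⟨β, T, a, b, c, d, dmin, dmax, -, -, -, -, -, -, -, -, -, -,
    -, hle, -, hab, -, hbc, -, hcd, had, hac, hbd⟩
  rcases le_max_iff.1 (T.four_point a b c d) with h | h <;> linarith
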